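/- arXiv:2010.08281 — 3 statements merged into one kernel-verified Lean document; each statement's English description precedes it below -/
import Mathlib

section
/- Let T be a decision tree and κ a knowledge formula with feature set G, bounds l, u and target label y_κ. Suppose that every path σ ∈ Σ(T) such that either F(σ) ∩ G = ∅, or the conjunction of the premises of κ and σ is satisfiable (i.e. there exists an input z that traverses σ and satisfies l f ≤ z f ≤ u f for every f ∈ G), has label con(σ) = y_κ. Then every input x satisfying the premise of κ (i.e. l f ≤ x f ≤ u f for every f ∈ G) is classified by T as y_κ, i.e. T(x) = y_κ. -/
/-- Comparison operators appearing in node conditions. -/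
inductive CmpOp where
  | le | lt | eq | gt | ge

/-- Semantics of a comparison operator. -/
def CmpOp.holds : CmpOp → ℝ → ℝ → Prop
  | .le, a, b => a ≤ b
  | .lt, a, b => a < b
  | .eq, a, b => a = b
  | .gt, a, b => a > b
  | .ge, a, b => a ≥ b

/-- A path of a decision tree: a premise (list of atomic conditions) and a label. -/
structure DPath (d : ℕ) (Y : Type) where
  pre : List (Fin d × CmpOp × ℝ)
  con : Y

/-- An input traverses a path iff it satisfies every condition of its premise. -/
def traverses {d : ℕ} {Y : Type} (x : Fin d → ℝ) (σ : DPath d Y) : Prop :=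
  ∀ c ∈ σ.pre, CmpOp.holds c.2.1 (x c.1) c.2.2

/-- The set of features occurring in the premise of a path. -/
def pathFeats {d : ℕ} {Y : Type} (σ : DPath d Y) : Finset (Fin d) :=
  (σ.pre.map Prod.fst).toFinset

theorem stmt0 {d : ℕ} {Y : Type}
    (Paths : Set (DPath d Y)) (T : (Fin d → ℝ) → Y)
    -- the paths of the tree partition the input space
    (hpart : ∀ x : Fin d → ℝ, ∃! σ, σ ∈ Paths ∧ traverses x σ)
    -- T x is the label of the (unique) path that x traverses
    (hT : ∀ x : Fin d → ℝ, ∀ σ ∈ Paths, traverses x σ → T x = σ.con)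
    -- the knowledge κ
    (G : Finset (Fin d)) (l u : Fin d → ℝ) (yκ : Y)
    -- every path with no feature overlap with κ, or consistent with κ, is labelled yκ
    (hlab : ∀ σ ∈ Paths,
      (Disjoint (pathFeats σ) G ∨
        ∃ z : Fin d → ℝ, traverses z σ ∧ ∀ f ∈ G, l f ≤ z f ∧ z f ≤ u f) →
      σ.con = yκ) :
    ∀ x : Fin d → ℝ, (∀ f ∈ G, l f ≤ x f ∧ x f ≤ u f) → T x = yκ := by
  intro x hx
  obtain ⟨σ, ⟨hσ, hxσ⟩, -⟩ := hpart x
  rw [hT x σ hσ hxσ]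
  exact hlab σ hσ (Or.inr ⟨x, hxσ, hx⟩)
end

section
/- Let κ be a knowledge formula with feature set G ⊆ Fin d, bounds l, u : Fin d → ℝ and target label y ∈ Y, and let T₁, …, Tₙ : (Fin d → ℝ) → Y be classifiers. Suppose there is a set S ⊆ Fin n with 2·|S| > n such that for every i ∈ S there exists a subset Gᵢ ⊆ G with the property that Tᵢ classifies every input x satisfying the partial premise over Gᵢ (i.e. l f ≤ x f ≤ u f for every f ∈ Gᵢ) as y. Then for every input x satisfying the full premise of κ (i.e. l f ≤ x f ≤ u f for every f ∈ G), every label y' ≠ y receives strictly fewer votes than y among T₁(x), …, Tₙ(x); hence the majority-vote prediction of the ensemble on x is y. -/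
/-! The full premise implies each partial premise over `Gᵢ ⊆ G`, so every tree in `S` votes `y`.
Votes for `y` and for `y'` come from disjoint sets of trees, so a strict majority for `y` leaves
fewer than half of the votes for `y'`. -/

open Finset

theorem card_filter_eq_lt_of_two_mul_card_gt {ι Y : Type*} [Fintype ι] [DecidableEq Y]
    (f : ι → Y) {y y' : Y} (hy' : y' ≠ y) (hmaj : Fintype.card ι < 2 * #{i | f i = y}) :
    #{i | f i = y'} < #{i | f i = y} := by
  have hdisj : Disjoint ({i | f i = y'} : Finset ι) ({i | f i = y} : Finset ι) :=
    disjoint_filter.2 fun _ _ hy'_vote hy_vote => hy' (hy'_vote.symm.trans hy_vote)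
  have hsum : #{i | f i = y'} + #{i | f i = y} ≤ Fintype.card ι := by
    rw [← card_disjUnion _ _ hdisj]
    exact card_le_univ _
  omega

theorem stmt2 {Y : Type} [DecidableEq Y] {d n : ℕ}
    (T : Fin n → (Fin d → ℝ) → Y)
    -- the knowledge κ: feature set G, bounds l u, target label y
    (G : Finset (Fin d)) (l u : Fin d → ℝ) (y : Y)
    (S : Finset (Fin n)) (hS : 2 * S.card > n)
    -- every tree indexed in S has some partial knowledge of κ embedded
    (hpartial : ∀ i ∈ S, ∃ Gi : Finset (Fin d), Gi ⊆ G ∧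
      ∀ x : Fin d → ℝ, (∀ f ∈ Gi, l f ≤ x f ∧ x f ≤ u f) → T i x = y) :
    ∀ x : Fin d → ℝ, (∀ f ∈ G, l f ≤ x f ∧ x f ≤ u f) →
      ∀ y' : Y, y' ≠ y →
        (Finset.univ.filter (fun i : Fin n => T i x = y')).card <
          (Finset.univ.filter (fun i : Fin n => T i x = y)).card := by
  intro x hx y' hy'
  have hS_vote_y : S ⊆ ({i | T i x = y} : Finset (Fin n)) := fun i hi => by
    obtain ⟨Gi, hGi, hT⟩ := hpartial i hi
    exact mem_filter.2 ⟨mem_univ i, hT x fun f hf => hx f (hGi hf)⟩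
  refine card_filter_eq_lt_of_two_mul_card_gt (fun i => T i x) hy' ?_
  calc Fintype.card (Fin n) = n := Fintype.card_fin n
    _ < 2 * #S := hS
    _ ≤ 2 * #{i | T i x = y} := Nat.mul_le_mul_left 2 (card_le_card hS_vote_y)
end

section
/- Let s be a binary decision tree, f ∈ Fin d a feature, b ∈ ℝ, ε ≥ 0, and y ∈ Y a target label, and define the expanded tree s' := Node f (b − ε) s (Node f (b + ε) (Leaf y) s). Then for every input x : Fin d → ℝ: if b − ε < x f and x f ≤ b + ε then eval s' x = y, and otherwise eval s' x = eval s x. In particular, the expansion embeds the knowledge (f ∈ (b−ε, b+ε]) ⇒ y while leaving the classification of all other inputs unchanged. -/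
/-- A binary decision tree over `d` real-valued features with labels in `Y`. -/
inductive DTree (d : ℕ) (Y : Type) where
  | leaf (y : Y) : DTree d Y
  | node (f : Fin d) (b : ℝ) (L R : DTree d Y) : DTree d Y

namespace DTree

/-- Evaluation of a decision tree on an input. -/
noncomputable def eval {d : ℕ} {Y : Type} : DTree d Y → (Fin d → ℝ) → Y
  | .leaf y, _ => y
  | .node f b L R, x => if x f ≤ b then eval L x else eval R x

end DTree

namespace DTree

variable {d : ℕ} {Y : Type} {f : Fin d} {b : ℝ} {L R : DTree d Y} {x : Fin d → ℝ}

theorem eval_node_of_le (h : x f ≤ b) : (node f b L R).eval x = L.eval x :=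
  if_pos h

theorem eval_node_of_lt (h : b < x f) : (node f b L R).eval x = R.eval x :=
  if_neg h.not_ge

end DTree

theorem stmt5_general {d : ℕ} {Y : Type} (s : DTree d Y) (f : Fin d) (b ε : ℝ)
    (y : Y) :
    ∀ x : Fin d → ℝ,
      (b - ε < x f ∧ x f ≤ b + ε →
        (DTree.node f (b - ε) s (DTree.node f (b + ε) (DTree.leaf y) s)).eval x = y) ∧
      (¬ (b - ε < x f ∧ x f ≤ b + ε) →
        (DTree.node f (b - ε) s (DTree.node f (b + ε) (DTree.leaf y) s)).eval x
          = s.eval x) := by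
  intro x
  refine ⟨fun ⟨hlo, hhi⟩ => ?_, fun hout => ?_⟩
  · rw [DTree.eval_node_of_lt hlo, DTree.eval_node_of_le hhi]
    rfl
  · rcases le_or_gt (x f) (b - ε) with hlo | hlo
    · exact DTree.eval_node_of_le hlo
    · have hhi : b + ε < x f := lt_of_not_ge fun hhi => hout ⟨hlo, hhi⟩
      rw [DTree.eval_node_of_lt hlo, DTree.eval_node_of_lt hhi]

theorem stmt5 {d : ℕ} {Y : Type} (s : DTree d Y) (f : Fin d) (b ε : ℝ)
    (hε : 0 ≤ ε) (y : Y) :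
    ∀ x : Fin d → ℝ,
      (b - ε < x f ∧ x f ≤ b + ε →
        (DTree.node f (b - ε) s (DTree.node f (b + ε) (DTree.leaf y) s)).eval x = y) ∧
      (¬ (b - ε < x f ∧ x f ≤ b + ε) →
        (DTree.node f (b - ε) s (DTree.node f (b + ε) (DTree.leaf y) s)).eval x
          = s.eval x) :=
  stmt5_general s f b ε y
end
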